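/- Let (S, τ) be a semi-frame for a ring R, let (S', τ') be a semi-frame for a ring R', and let φ : S → S' be a homomorphism of graded rings with τ' ∘ φ = φ ∘ τ, so that φ induces a ring homomorphism R → R'; assume R → R' is faithfully flat. Let 0 → M → N → P → 0 be a complex of finite projective graded S-modules (with morphisms graded S-module homomorphisms and all composites zero). Then the complex is exact if and only if its base change 0 → M ⊗_S S' → N ⊗_S S' → P ⊗_S S' → 0 along φ is exact. -/

import Mathlib

universe u v

/-- A *semi-frame* `(S, τ)`: `S = ⨁ₙ Sₙ` a ℤ-graded commutative ring together with a
ring homomorphism `τ : S → S₀` (formalized as a ring endomorphism landing in `𝒜 0`)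
such that `τ` is the identity on `S₀`, a bijection `S₋ₙ → S₀` for every `n ≥ 1`, and
`τ(S₁)` is contained in the Jacobson radical of `S₀`. -/
structure SemiFrame {A : Type*} [CommRing A] (𝒜 : ℤ → AddSubgroup A)
    [GradedRing 𝒜] where
  tau : A →+* A
  tau_mem_zero : ∀ a : A, tau a ∈ 𝒜 0
  tau_id_zero : ∀ a ∈ 𝒜 0, tau a = a
  tau_inj_neg : ∀ n : ℕ, 1 ≤ n → ∀ a ∈ 𝒜 (-(n : ℤ)), ∀ b ∈ 𝒜 (-(n : ℤ)),
    tau a = tau b → a = b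
  tau_surj_neg : ∀ n : ℕ, 1 ≤ n → ∀ c ∈ 𝒜 0, ∃ a ∈ 𝒜 (-(n : ℤ)), tau a = c
  tau_S1_rad : ∀ s ∈ 𝒜 1, ∀ y ∈ 𝒜 0, ∃ z ∈ 𝒜 0, (1 - tau s * y) * z = 1

/-- The kernel of `ν : S → R = S₀/τ(S₁)` (the projection `S₀ → R` in degree `0`,
zero in other degrees): the ideal generated by the homogeneous elements of nonzero
degree together with `τ(S₁)`; thus `R = S ⧸ kerNu`. -/
def kerNu {A : Type*} [CommRing A] (𝒜 : ℤ → AddSubgroup A) [GradedRing 𝒜]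
    (τ : A →+* A) : Ideal A :=
  Ideal.span ((⋃ (n : ℤ) (_ : n ≠ 0), (𝒜 n : Set A)) ∪ (τ '' (𝒜 1 : Set A)))

/-!
The key tool is a graded Nakayama lemma for the ideal `ker ν`. This ideal is homogeneous, and
its degree-zero elements lie in the Jacobson radical of `S₀`: products of elements of degrees `n`
and `-n` equal the product of their images under `τ`, and `τ` of a positive-degree element is
`τ` of a degree-one element. Hence `V ≤ W + (ker ν) V` forces `V ≤ W` for homogeneous `V`, `W`
with `V` finitely generated.

Since `R ⊗_S C = C / (ker ν) C`, faithful flatness of `R → R'` turns `S' ⊗_S C = 0` into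
`C = (ker ν) C`. Applied to the cokernel of `g`, to `ker g / im f` and to `ker f` (the relevant
short exact sequences end in the projective modules `P` and `ker g`, so they stay left exact
after base change), Nakayama gives surjectivity of `g`, exactness at `N` and injectivity of `f`.
Conversely, a short exact sequence ending in a flat module stays exact after any base change.
-/

open DirectSum

section GradeZeroJacobson

variable {A : Type*} [CommRing A] (𝒜 : ℤ → AddSubgroup A) [GradedRing 𝒜]

-- On `𝒜 0` this is the Jacobson radical of the ring `𝒜 0`, in the shape of `tau_S1_rad`.
def gradeZeroJacobson : Set A := {a | ∀ y ∈ 𝒜 0, ∃ z ∈ 𝒜 0, (1 - a * y) * z = 1}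

variable {𝒜}

lemma zero_mem_gradeZeroJacobson : (0 : A) ∈ gradeZeroJacobson 𝒜 :=
  fun _ _ => ⟨1, SetLike.one_mem_graded 𝒜, by ring⟩

lemma add_mem_gradeZeroJacobson {a b : A} (ha : a ∈ gradeZeroJacobson 𝒜)
    (hb : b ∈ gradeZeroJacobson 𝒜) : a + b ∈ gradeZeroJacobson 𝒜 := by
  intro y hy
  obtain ⟨z₁, hz₁, e₁⟩ := ha y hy
  obtain ⟨z₂, hz₂, e₂⟩ := hb (y * z₁) (by simpa using SetLike.mul_mem_graded hy hz₁)
  exact ⟨z₁ * z₂, by simpa using SetLike.mul_mem_graded hz₁ hz₂,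
    by linear_combination z₂ * e₁ + e₂⟩

lemma mul_mem_gradeZeroJacobson {c a : A} (hc : c ∈ 𝒜 0) (ha : a ∈ gradeZeroJacobson 𝒜) :
    c * a ∈ gradeZeroJacobson 𝒜 := by
  intro y hy
  obtain ⟨z, hz, e⟩ := ha (c * y) (by simpa using SetLike.mul_mem_graded hc hy)
  exact ⟨z, hz, by linear_combination e⟩

end GradeZeroJacobson

namespace SemiFrame

variable {A : Type*} [CommRing A] {𝒜 : ℤ → AddSubgroup A} [GradedRing 𝒜]

-- Multiplying `v` by a power of a degree `-1` lift of `1` moves it into degree `1` and keeps `τ v`.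
lemma tau_mem_gradeZeroJacobson_of_pos (SF : SemiFrame 𝒜) {n : ℤ} (hn : 0 < n) {v : A}
    (hv : v ∈ 𝒜 n) : SF.tau v ∈ gradeZeroJacobson 𝒜 := by
  obtain ⟨u, hu, hu1⟩ := SF.tau_surj_neg 1 le_rfl 1 (SetLike.one_mem_graded 𝒜)
  have hdeg : u ^ (n - 1).toNat * v ∈ 𝒜 1 := by
    convert SetLike.mul_mem_graded (SetLike.pow_mem_graded (n - 1).toNat hu) hv using 2
    rw [nsmul_eq_mul, Int.toNat_of_nonneg (by omega)]
    push_cast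
    ring
  have h := SF.tau_S1_rad _ hdeg
  rwa [map_mul, map_pow, hu1, one_pow, one_mul] at h

lemma mul_mem_gradeZeroJacobson_of_mem_neg (SF : SemiFrame 𝒜) {m : ℤ} (hm : m ≠ 0) {v w : A}
    (hv : v ∈ 𝒜 m) (hw : w ∈ 𝒜 (-m)) : v * w ∈ gradeZeroJacobson 𝒜 := by
  have hvw : v * w = SF.tau v * SF.tau w := by
    rw [← map_mul, SF.tau_id_zero _ (by simpa using SetLike.mul_mem_graded hv hw)]
  rw [hvw]
  rcases hm.lt_or_gt with hneg | hpos
  · exact mul_mem_gradeZeroJacobson (SF.tau_mem_zero v)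
      (SF.tau_mem_gradeZeroJacobson_of_pos (by omega) hw)
  · rw [mul_comm]
    exact mul_mem_gradeZeroJacobson (SF.tau_mem_zero w)
      (SF.tau_mem_gradeZeroJacobson_of_pos hpos hv)

lemma kerNu_isHomogeneous (SF : SemiFrame 𝒜) : (kerNu 𝒜 SF.tau).IsHomogeneous 𝒜 := by
  apply Ideal.homogeneous_span
  rintro x (hx | ⟨s, -, rfl⟩)
  · simp only [Set.mem_iUnion] at hx
    obtain ⟨n, -, hn⟩ := hx
    exact ⟨n, hn⟩
  · exact ⟨0, SF.tau_mem_zero s⟩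

lemma decompose_zero_mem_gradeZeroJacobson (SF : SemiFrame 𝒜) {b : A} (hb : b ∈ kerNu 𝒜 SF.tau) :
    (decompose 𝒜 b 0 : A) ∈ gradeZeroJacobson 𝒜 := by
  induction hb using Submodule.span_induction with
  | mem x hx =>
    rcases hx with hx | ⟨s, hs, rfl⟩
    · simp only [Set.mem_iUnion] at hx
      obtain ⟨n, hn, hx⟩ := hx
      rw [decompose_of_mem_ne 𝒜 hx hn]
      exact zero_mem_gradeZeroJacobson
    · rw [decompose_of_mem_same 𝒜 (SF.tau_mem_zero s)]
      exact SF.tau_S1_rad s hs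
  | zero => simpa using zero_mem_gradeZeroJacobson
  | add x y _ _ hx hy =>
    rw [decompose_add, DirectSum.add_apply, AddMemClass.coe_add]
    exact add_mem_gradeZeroJacobson hx hy
  | smul c x _ hx =>
    rw [smul_eq_mul]
    induction c using Decomposition.inductionOn 𝒜 with
    | zero => simpa using zero_mem_gradeZeroJacobson
    | @homogeneous m c =>
      rw [show (0 : ℤ) = m + -m by ring, coe_decompose_mul_add_of_left_mem 𝒜 c.2]
      by_cases hm : m = 0
      · subst hm
        simpa using mul_mem_gradeZeroJacobson c.2 hx
      · exact SF.mul_mem_gradeZeroJacobson_of_mem_neg hm c.2 (SetLike.coe_mem _)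
    | add c₁ c₂ h₁ h₂ =>
      rw [add_mul, decompose_add, DirectSum.add_apply, AddMemClass.coe_add]
      exact add_mem_gradeZeroJacobson h₁ h₂

lemma isUnit_one_sub_of_mem_kerNu (SF : SemiFrame 𝒜) {b : A} (hb : b ∈ kerNu 𝒜 SF.tau)
    (hb0 : b ∈ 𝒜 0) : IsUnit (1 - b) := by
  have h := SF.decompose_zero_mem_gradeZeroJacobson hb
  rw [decompose_of_mem_same 𝒜 hb0] at h
  obtain ⟨z, -, hz⟩ := h 1 (SetLike.one_mem_graded 𝒜)
  exact IsUnit.of_mul_eq_one z (by simpa using hz)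

end SemiFrame

section GradedModule

variable {A : Type*} [CommRing A] {𝒜 : ℤ → AddSubgroup A} [GradedRing 𝒜]
  {M : Type*} [AddCommGroup M] [Module A M] {ℳ : ℤ → AddSubgroup M} [Decomposition ℳ]
  {N : Type*} [AddCommGroup N] [Module A N] {𝒩 : ℤ → AddSubgroup N} [Decomposition 𝒩]

lemma LinearMap.map_decompose_of_graded (f : M →ₗ[A] N) (hf : ∀ n, ∀ x ∈ ℳ n, f x ∈ 𝒩 n)
    (x : M) (n : ℤ) : f (decompose ℳ x n) = decompose 𝒩 (f x) n := by
  induction x using Decomposition.inductionOn ℳ with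
  | zero => simp
  | @homogeneous j x =>
    by_cases h : j = n
    · subst h
      rw [decompose_of_mem_same ℳ x.2, decompose_of_mem_same 𝒩 (hf _ _ x.2)]
    · rw [decompose_of_mem_ne ℳ x.2 h, decompose_of_mem_ne 𝒩 (hf _ _ x.2) h, map_zero]
  | add x y hx hy =>
    simp only [map_add, decompose_add, DirectSum.add_apply, AddMemClass.coe_add, hx, hy]

lemma LinearMap.ker_isHomogeneous_of_graded (f : M →ₗ[A] N)
    (hf : ∀ n, ∀ x ∈ ℳ n, f x ∈ 𝒩 n) : (LinearMap.ker f).IsHomogeneous ℳ := by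
  intro n x hx
  rw [LinearMap.mem_ker] at hx ⊢
  rw [f.map_decompose_of_graded hf, hx]
  simp

lemma LinearMap.range_isHomogeneous_of_graded (f : M →ₗ[A] N)
    (hf : ∀ n, ∀ x ∈ ℳ n, f x ∈ 𝒩 n) : (LinearMap.range f).IsHomogeneous 𝒩 := by
  rintro n _ ⟨x, rfl⟩
  exact ⟨_, f.map_decompose_of_graded hf x n⟩

variable [SetLike.GradedSMul 𝒜 ℳ]

lemma coe_decompose_smul_add_of_right_mem {j : ℤ} {v : M} (hv : v ∈ ℳ j) (r : A) (i : ℤ) :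
    (decompose ℳ (r • v) (i + j) : M) = (decompose 𝒜 r i : A) • v := by
  induction r using Decomposition.inductionOn 𝒜 with
  | zero => simp
  | @homogeneous k r =>
    have hrv : (r : A) • v ∈ ℳ (k + j) := SetLike.GradedSMul.smul_mem r.2 hv
    by_cases h : k = i
    · subst h
      rw [decompose_of_mem_same ℳ hrv, decompose_of_mem_same 𝒜 r.2]
    · rw [decompose_of_mem_ne ℳ hrv (by omega), decompose_of_mem_ne 𝒜 r.2 h, zero_smul]
  | add r s hr hs =>
    rw [add_smul, decompose_add, DirectSum.add_apply, AddMemClass.coe_add, hr, hs,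
      decompose_add, DirectSum.add_apply, AddMemClass.coe_add, add_smul]

-- Ordinary Nakayama yields `r ≡ 1 mod I` with `r • V ⊆ W`; on homogeneous elements only the
-- degree-zero part `r₀` of `r` contributes, and `r₀` is a unit.
theorem Submodule.le_of_le_sup_smul_of_isHomogeneous {I : Ideal A} (hI : I.IsHomogeneous 𝒜)
    (hunit : ∀ b ∈ I, b ∈ 𝒜 0 → IsUnit (1 - b)) {V W : Submodule A M} (hV : V.FG)
    (hVh : V.IsHomogeneous ℳ) (hWh : W.IsHomogeneous ℳ) (hle : V ≤ W ⊔ I • V) : V ≤ W := by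
  obtain ⟨r, hr1, hr⟩ := Submodule.exists_sub_one_mem_and_smul_eq_zero_of_fg_of_le_smul I
    (V.map W.mkQ) (hV.map _) (by
      simpa [Submodule.map_sup, Submodule.map_smul''] using Submodule.map_mono (f := W.mkQ) hle)
  have hrW : ∀ v ∈ V, r • v ∈ W := fun v hv =>
    (Submodule.Quotient.mk_eq_zero W).mp (hr _ (Submodule.mem_map_of_mem hv))
  have hr0 : IsUnit (decompose 𝒜 r 0 : A) := by
    have h1r : (decompose 𝒜 (1 - r) 0 : A) = 1 - decompose 𝒜 r 0 := by
      rw [decompose_sub, DirectSum.sub_apply, AddSubgroupClass.coe_sub,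
        decompose_of_mem_same 𝒜 (SetLike.one_mem_graded 𝒜)]
    have hmem : (decompose 𝒜 (1 - r) 0 : A) ∈ I :=
      hI 0 (by simpa [neg_sub] using I.neg_mem hr1)
    simpa only [h1r, sub_sub_cancel] using hunit _ hmem (SetLike.coe_mem _)
  intro v hv
  rw [hWh.mem_iff]
  intro j
  have hvj : (decompose ℳ v j : M) ∈ V := hVh j hv
  have hr0v : (decompose 𝒜 r 0 : A) • (decompose ℳ v j : M) ∈ W := by
    rw [← coe_decompose_smul_add_of_right_mem (SetLike.coe_mem _), zero_add]
    exact hWh j (hrW _ hvj)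
  exact (W.smul_mem_iff_of_isUnit hr0).mp hr0v

end GradedModule

section BaseChange

open TensorProduct

theorem smul_top_eq_top_of_subsingleton_baseChange {A A' B : Type*} [CommRing A] [CommRing A']
    [CommRing B] [Algebra A A'] [Algebra A B] [Algebra A' B] [IsScalarTower A A' B]
    (I : Ideal A) [Algebra (A ⧸ I) B] [IsScalarTower A (A ⧸ I) B]
    [Module.FaithfullyFlat (A ⧸ I) B] (C : Type*) [AddCommGroup C] [Module A C]
    [Subsingleton (A' ⊗[A] C)] : I • (⊤ : Submodule A C) = ⊤ := by
  have : Subsingleton (B ⊗[A] C) :=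
    (AlgebraTensorModule.cancelBaseChange A A' A' B C).symm.toEquiv.injective.subsingleton
  have : Subsingleton ((A ⧸ I) ⊗[A] C ⊗[A ⧸ I] B) :=
    ((TensorProduct.comm _ _ _).trans
      (AlgebraTensorModule.cancelBaseChange A (A ⧸ I) (A ⧸ I) B C)).toEquiv.injective.subsingleton
  have : Subsingleton ((A ⧸ I) ⊗[A] C) :=
    Module.FaithfullyFlat.rTensor_reflects_triviality (A ⧸ I) B _
  have : Subsingleton (C ⧸ I • (⊤ : Submodule A C)) :=
    (quotTensorEquivQuotSMul C I).symm.toEquiv.injective.subsingleton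
  exact Submodule.Quotient.subsingleton_iff.mp this

variable {A A' : Type*} [CommRing A] [CommRing A'] [Algebra A A']
  {M N P : Type*} [AddCommGroup M] [Module A M] [AddCommGroup N] [Module A N]
  [AddCommGroup P] [Module A P]

lemma LinearMap.baseChange_injective_of_exact_of_flat [Module.Flat A P] {f : M →ₗ[A] N}
    {g : N →ₗ[A] P} (hf : Function.Injective f) (hfg : Function.Exact f g)
    (hg : Function.Surjective g) : Function.Injective (f.baseChange A') := by
  rw [LinearMap.baseChange_eq_ltensor]
  exact LinearMap.lTensor_injective_of_exact_of_flat g hg f hf hfg A'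

lemma LinearMap.baseChange_shortExact [Module.Flat A P] {f : M →ₗ[A] N} {g : N →ₗ[A] P}
    (hf : Function.Injective f) (hfg : Function.Exact f g) (hg : Function.Surjective g) :
    Function.Injective (f.baseChange A') ∧ Function.Exact (f.baseChange A') (g.baseChange A') ∧
      Function.Surjective (g.baseChange A') := by
  refine ⟨baseChange_injective_of_exact_of_flat hf hfg hg, ?_, ?_⟩
  · rw [LinearMap.baseChange_eq_ltensor, LinearMap.baseChange_eq_ltensor]
    exact lTensor_exact A' hfg hg
  · rw [LinearMap.baseChange_eq_ltensor]
    exact LinearMap.lTensor_surjective A' hg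

lemma LinearMap.subsingleton_baseChange_quotient_range {u : M →ₗ[A] N}
    (hu : Function.Surjective (u.baseChange A')) :
    Subsingleton (A' ⊗[A] (N ⧸ LinearMap.range u)) := by
  have hmkQ : Function.Surjective ((LinearMap.range u).mkQ.baseChange A') := by
    rw [LinearMap.baseChange_eq_ltensor]
    exact LinearMap.lTensor_surjective A' (Submodule.mkQ_surjective _)
  refine subsingleton_of_forall_eq 0 fun z => ?_
  obtain ⟨y, rfl⟩ := hmkQ z
  obtain ⟨x, rfl⟩ := hu y
  rw [← LinearMap.comp_apply, ← LinearMap.baseChange_comp, LinearMap.range_mkQ_comp,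
    LinearMap.baseChange_zero, LinearMap.zero_apply]

lemma Submodule.top_le_sup_smul_of_smul_top_quotient {W : Submodule A N} {I : Ideal A}
    (h : I • (⊤ : Submodule A (N ⧸ W)) = ⊤) : ⊤ ≤ W ⊔ I • ⊤ := by
  have hmap : (I • ⊤ : Submodule A N).map W.mkQ = ⊤ := by
    rw [Submodule.map_smul'', Submodule.map_top, Submodule.range_mkQ, h]
  refine le_of_eq ?_
  calc ⊤ = (⊤ : Submodule A (N ⧸ W)).comap W.mkQ := (Submodule.comap_top _).symm
    _ = W ⊔ I • ⊤ := by rw [← hmap, Submodule.comap_map_mkQ, sup_comm]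

lemma Module.Projective.of_exact [Module.Projective A N] [Module.Projective A P]
    {f : M →ₗ[A] N} {g : N →ₗ[A] P} (hf : Function.Injective f) (hfg : Function.Exact f g)
    (hg : Function.Surjective g) : Module.Projective A M := by
  obtain ⟨s, hs⟩ := Module.projective_lifting_property g LinearMap.id hg
  have hsplit := (hfg.split_tfae hf hg).out 0 1
  obtain ⟨r, hr⟩ := hsplit.mp ⟨s, hs⟩
  exact Module.Projective.of_split f r hr

end BaseChange

namespace SemiFrame

open TensorProduct

universe w

variable {A : Type*} [CommRing A] {𝒜 : ℤ → AddSubgroup A} [GradedRing 𝒜]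
  {A' : Type*} [CommRing A'] [Algebra A A']
  {M : Type w} [AddCommGroup M] [Module A M] {ℳ : ℤ → AddSubgroup M} [Decomposition ℳ]
  {N : Type w} [AddCommGroup N] [Module A N] {𝒩 : ℤ → AddSubgroup N} [Decomposition 𝒩]
  {P : Type w} [AddCommGroup P] [Module A P] {𝒬 : ℤ → AddSubgroup P} [Decomposition 𝒬]

theorem le_of_le_sup_kerNu_smul [SetLike.GradedSMul 𝒜 ℳ] (SF : SemiFrame 𝒜)
    {V W : Submodule A M} (hV : V.FG) (hVh : V.IsHomogeneous ℳ) (hWh : W.IsHomogeneous ℳ)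
    (hle : V ≤ W ⊔ kerNu 𝒜 SF.tau • V) : V ≤ W :=
  Submodule.le_of_le_sup_smul_of_isHomogeneous SF.kerNu_isHomogeneous
    (fun _ hb hb0 => SF.isUnit_one_sub_of_mem_kerNu hb hb0) hV hVh hWh hle

theorem surjective_of_baseChange_surjective [SetLike.GradedSMul 𝒜 𝒩] (SF : SemiFrame 𝒜)
    (hfl : ∀ (C : Type w) [AddCommGroup C] [Module A C],
      Subsingleton (A' ⊗[A] C) → kerNu 𝒜 SF.tau • (⊤ : Submodule A C) = ⊤)
    [Module.Finite A N] (u : M →ₗ[A] N) (hu : ∀ n, ∀ x ∈ ℳ n, u x ∈ 𝒩 n)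
    (hbc : Function.Surjective (u.baseChange A')) : Function.Surjective u := by
  have hle := Submodule.top_le_sup_smul_of_smul_top_quotient
    (hfl _ (u.subsingleton_baseChange_quotient_range hbc))
  have htop := SF.le_of_le_sup_kerNu_smul Module.Finite.fg_top (fun _ _ _ => trivial)
    (u.range_isHomogeneous_of_graded hu) hle
  exact LinearMap.range_eq_top.mp (top_le_iff.mp htop)

theorem exact_of_baseChange_exact [SetLike.GradedSMul 𝒜 𝒩] (SF : SemiFrame 𝒜)
    (hfl : ∀ (C : Type w) [AddCommGroup C] [Module A C],
      Subsingleton (A' ⊗[A] C) → kerNu 𝒜 SF.tau • (⊤ : Submodule A C) = ⊤)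
    [Module.Finite A N] [Module.FinitePresentation A P] [Module.Flat A P]
    (f : M →ₗ[A] N) (hf : ∀ n, ∀ x ∈ ℳ n, f x ∈ 𝒩 n)
    (g : N →ₗ[A] P) (hg : ∀ n, ∀ x ∈ 𝒩 n, g x ∈ 𝒬 n) (hgf : g ∘ₗ f = 0)
    (hgsurj : Function.Surjective g)
    (hbc : Function.Exact (f.baseChange A') (g.baseChange A')) : Function.Exact f g := by
  set K := LinearMap.ker g
  have hKinj : Function.Injective (K.subtype.baseChange A') :=
    LinearMap.baseChange_injective_of_exact_of_flat K.injective_subtype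
      (LinearMap.exact_subtype_ker_map g) hgsurj
  set f₀ := f.codRestrict K fun x => LinearMap.range_le_ker_iff.mpr hgf ⟨x, rfl⟩
  have hf₀ : Function.Surjective (f₀.baseChange A') := by
    intro y
    obtain ⟨x, hx⟩ := (hbc (K.subtype.baseChange A' y)).mp (by
      rw [← LinearMap.comp_apply, ← LinearMap.baseChange_comp, LinearMap.comp_ker_subtype,
        LinearMap.baseChange_zero, LinearMap.zero_apply])
    refine ⟨x, hKinj ?_⟩
    rwa [← LinearMap.comp_apply, ← LinearMap.baseChange_comp, LinearMap.subtype_comp_codRestrict]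
  have hle := Submodule.map_mono (f := K.subtype) (Submodule.top_le_sup_smul_of_smul_top_quotient
    (hfl _ (f₀.subsingleton_baseChange_quotient_range hf₀)))
  rw [Submodule.map_sup, Submodule.map_smul'', Submodule.map_top, Submodule.range_subtype,
    ← LinearMap.range_comp, LinearMap.subtype_comp_codRestrict] at hle
  refine LinearMap.exact_iff.mpr (le_antisymm ?_ (LinearMap.range_le_ker_iff.mpr hgf))
  exact SF.le_of_le_sup_kerNu_smul (Module.FinitePresentation.fg_ker g hgsurj)
    (g.ker_isHomogeneous_of_graded hg) (f.range_isHomogeneous_of_graded hf) hle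

theorem injective_of_baseChange_injective [SetLike.GradedSMul 𝒜 ℳ] (SF : SemiFrame 𝒜)
    (hfl : ∀ (C : Type w) [AddCommGroup C] [Module A C],
      Subsingleton (A' ⊗[A] C) → kerNu 𝒜 SF.tau • (⊤ : Submodule A C) = ⊤)
    [Module.Finite A M] (f : M →ₗ[A] N) (hf : ∀ n, ∀ x ∈ ℳ n, f x ∈ 𝒩 n)
    [Module.Flat A (LinearMap.range f)] [Module.FinitePresentation A (LinearMap.range f)]
    (hbc : Function.Injective (f.baseChange A')) : Function.Injective f := by
  set L := LinearMap.ker f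
  have hexact : Function.Exact L.subtype f.rangeRestrict := by
    rw [LinearMap.exact_iff, LinearMap.ker_rangeRestrict, Submodule.range_subtype]
  have hLinj : Function.Injective (L.subtype.baseChange A') :=
    LinearMap.baseChange_injective_of_exact_of_flat L.injective_subtype hexact
      f.surjective_rangeRestrict
  have hL0 : Subsingleton (A' ⊗[A] L) := by
    refine subsingleton_of_forall_eq 0 fun z => hLinj (hbc ?_)
    rw [map_zero, map_zero, ← LinearMap.comp_apply, ← LinearMap.baseChange_comp,
      LinearMap.comp_ker_subtype, LinearMap.baseChange_zero, LinearMap.zero_apply]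
  have hL := congrArg (Submodule.map L.subtype) (hfl _ hL0)
  rw [Submodule.map_smul'', Submodule.map_top, Submodule.range_subtype] at hL
  have hLfg : L.FG := by
    simpa [L] using Module.FinitePresentation.fg_ker f.rangeRestrict f.surjective_rangeRestrict
  have hbot := SF.le_of_le_sup_kerNu_smul hLfg (f.ker_isHomogeneous_of_graded hf)
    (fun _ _ hx => by simp [(Submodule.mem_bot A).mp hx]) (by rw [bot_sup_eq, hL])
  exact LinearMap.ker_eq_bot.mp (le_bot_iff.mp hbot)

end SemiFrame

/-- `φ` is packaged as the algebra map of an `S`-algebra structure on `S'`, the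
induced map `R = S⧸ker ν → R' = S'⧸ker ν'` as the algebra map of an `R`-algebra
structure on `R'`, and exactness is injectivity + (range = kernel) + surjectivity. -/
theorem gradedComplex_exact_iff_baseChange_exact_general
    {A : Type u} [CommRing A] (𝒜 : ℤ → AddSubgroup A) [GradedRing 𝒜]
    (SF : SemiFrame 𝒜)
    {A' : Type v} [CommRing A'] (𝒜' : ℤ → AddSubgroup A') [GradedRing 𝒜']
    (SF' : SemiFrame 𝒜')
    [Algebra A A']
    -- the induced ring homomorphism `R → R'` …
    [Algebra (A ⧸ kerNu 𝒜 SF.tau) (A' ⧸ kerNu 𝒜' SF'.tau)]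
    (hquot : ∀ a : A,
      algebraMap (A ⧸ kerNu 𝒜 SF.tau) (A' ⧸ kerNu 𝒜' SF'.tau)
          (Ideal.Quotient.mk (kerNu 𝒜 SF.tau) a)
        = Ideal.Quotient.mk (kerNu 𝒜' SF'.tau) (algebraMap A A' a))
    -- … is faithfully flat:
    [Module.FaithfullyFlat (A ⧸ kerNu 𝒜 SF.tau) (A' ⧸ kerNu 𝒜' SF'.tau)]
    -- a complex `0 → M → N → P → 0` of finite projective graded `S`-modules:
    {M : Type u} [AddCommGroup M] [Module A M]
    (ℳ : ℤ → AddSubgroup M) (hMint : DirectSum.IsInternal ℳ)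
    (hMsmul : ∀ (i j : ℤ), ∀ a ∈ 𝒜 i, ∀ x ∈ ℳ j, a • x ∈ ℳ (i + j))
    [Module.Finite A M]
    {N : Type u} [AddCommGroup N] [Module A N]
    (𝒩 : ℤ → AddSubgroup N) (hNint : DirectSum.IsInternal 𝒩)
    (hNsmul : ∀ (i j : ℤ), ∀ a ∈ 𝒜 i, ∀ x ∈ 𝒩 j, a • x ∈ 𝒩 (i + j))
    [Module.Finite A N] [Module.Projective A N]
    {P : Type u} [AddCommGroup P] [Module A P]
    (𝒬 : ℤ → AddSubgroup P) (hPint : DirectSum.IsInternal 𝒬)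
    (hPsmul : ∀ (i j : ℤ), ∀ a ∈ 𝒜 i, ∀ x ∈ 𝒬 j, a • x ∈ 𝒬 (i + j))
    [Module.Finite A P] [Module.Projective A P]
    (f : M →ₗ[A] N) (hfgraded : ∀ n : ℤ, ∀ x ∈ ℳ n, f x ∈ 𝒩 n)
    (g : N →ₗ[A] P) (hggraded : ∀ n : ℤ, ∀ x ∈ 𝒩 n, g x ∈ 𝒬 n)
    (hcomplex : ∀ x : M, g (f x) = 0) :
    (Function.Injective f ∧ LinearMap.range f = LinearMap.ker g ∧
        Function.Surjective g) ↔
      (Function.Injective (LinearMap.baseChange A' f) ∧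
        LinearMap.range (LinearMap.baseChange A' f)
          = LinearMap.ker (LinearMap.baseChange A' g) ∧
        Function.Surjective (LinearMap.baseChange A' g)) := by
  let _ := hMint.chooseDecomposition
  let _ := hNint.chooseDecomposition
  let _ := hPint.chooseDecomposition
  have : SetLike.GradedSMul 𝒜 ℳ := ⟨fun {_ _ _ _} ha hx => hMsmul _ _ _ ha _ hx⟩
  have : SetLike.GradedSMul 𝒜 𝒩 := ⟨fun {_ _ _ _} ha hx => hNsmul _ _ _ ha _ hx⟩
  have : SetLike.GradedSMul 𝒜 𝒬 := ⟨fun {_ _ _ _} ha hx => hPsmul _ _ _ ha _ hx⟩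
  have : IsScalarTower A (A ⧸ kerNu 𝒜 SF.tau) (A' ⧸ kerNu 𝒜' SF'.tau) :=
    IsScalarTower.of_algebraMap_eq fun a => (hquot a).symm
  have hfl : ∀ (C : Type u) [AddCommGroup C] [Module A C], Subsingleton (TensorProduct A A' C) →
      kerNu 𝒜 SF.tau • (⊤ : Submodule A C) = ⊤ := fun C _ _ _ =>
    smul_top_eq_top_of_subsingleton_baseChange (A' := A') (B := A' ⧸ kerNu 𝒜' SF'.tau) _ C
  have : Module.FinitePresentation A N := Module.finitePresentation_of_projective A N
  have : Module.FinitePresentation A P := Module.finitePresentation_of_projective A P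
  simp only [eq_comm (a := LinearMap.range _), ← LinearMap.exact_iff]
  refine ⟨fun ⟨hf, hfg, hg⟩ => LinearMap.baseChange_shortExact hf hfg hg, ?_⟩
  rintro ⟨hf', hfg', hg'⟩
  have hg := SF.surjective_of_baseChange_surjective hfl g hggraded hg'
  have hfg :=
    SF.exact_of_baseChange_exact hfl f hfgraded g hggraded (LinearMap.ext hcomplex) hg hfg'
  have hrange : Function.Exact (LinearMap.range f).subtype g := by
    rwa [LinearMap.exact_iff, Submodule.range_subtype, ← LinearMap.exact_iff]
  have := Module.Projective.of_exact (LinearMap.range f).injective_subtype hrange hg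
  have := Module.finitePresentation_of_projective_of_exact _ _
    (LinearMap.range f).injective_subtype hg hrange
  exact ⟨SF.injective_of_baseChange_injective hfl f hfgraded hf', hfg, hg⟩

/-- **Statement 11.** Let `(S, τ)` be a semi-frame for `R`, `(S', τ')` a semi-frame
for `R'`, and `φ : S → S'` a homomorphism of graded rings with `τ' ∘ φ = φ ∘ τ`, so
that `φ` induces a ring homomorphism `R → R'`; assume `R → R'` is faithfully flat.
Let `0 → M → N → P → 0` be a complex of finite projective graded `S`-modules.  Then
the complex is exact if and only if its base change
`0 → M ⊗_S S' → N ⊗_S S' → P ⊗_S S' → 0` along `φ` is exact.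

Here `φ` is packaged as the algebra map of an `S`-algebra structure on `S'`, the
induced map `R = S⧸ker ν → R' = S'⧸ker ν'` as the algebra map of an `R`-algebra
structure on `R'`, and exactness is injectivity + (range = kernel) + surjectivity. -/
theorem gradedComplex_exact_iff_baseChange_exact
    {A : Type u} [CommRing A] (𝒜 : ℤ → AddSubgroup A) [GradedRing 𝒜]
    (SF : SemiFrame 𝒜)
    {A' : Type v} [CommRing A'] (𝒜' : ℤ → AddSubgroup A') [GradedRing 𝒜']
    (SF' : SemiFrame 𝒜')
    [Algebra A A']
    (hφgraded : ∀ n : ℤ, ∀ a ∈ 𝒜 n, algebraMap A A' a ∈ 𝒜' n)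
    (hφcomm : ∀ a : A, SF'.tau (algebraMap A A' a) = algebraMap A A' (SF.tau a))
    -- the induced ring homomorphism `R → R'` …
    [Algebra (A ⧸ kerNu 𝒜 SF.tau) (A' ⧸ kerNu 𝒜' SF'.tau)]
    (hquot : ∀ a : A,
      algebraMap (A ⧸ kerNu 𝒜 SF.tau) (A' ⧸ kerNu 𝒜' SF'.tau)
          (Ideal.Quotient.mk (kerNu 𝒜 SF.tau) a)
        = Ideal.Quotient.mk (kerNu 𝒜' SF'.tau) (algebraMap A A' a))
    -- … is faithfully flat:
    [Module.FaithfullyFlat (A ⧸ kerNu 𝒜 SF.tau) (A' ⧸ kerNu 𝒜' SF'.tau)]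
    -- a complex `0 → M → N → P → 0` of finite projective graded `S`-modules:
    {M : Type u} [AddCommGroup M] [Module A M]
    (ℳ : ℤ → AddSubgroup M) (hMint : DirectSum.IsInternal ℳ)
    (hMsmul : ∀ (i j : ℤ), ∀ a ∈ 𝒜 i, ∀ x ∈ ℳ j, a • x ∈ ℳ (i + j))
    [Module.Finite A M] [Module.Projective A M]
    {N : Type u} [AddCommGroup N] [Module A N]
    (𝒩 : ℤ → AddSubgroup N) (hNint : DirectSum.IsInternal 𝒩)
    (hNsmul : ∀ (i j : ℤ), ∀ a ∈ 𝒜 i, ∀ x ∈ 𝒩 j, a • x ∈ 𝒩 (i + j))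
    [Module.Finite A N] [Module.Projective A N]
    {P : Type u} [AddCommGroup P] [Module A P]
    (𝒬 : ℤ → AddSubgroup P) (hPint : DirectSum.IsInternal 𝒬)
    (hPsmul : ∀ (i j : ℤ), ∀ a ∈ 𝒜 i, ∀ x ∈ 𝒬 j, a • x ∈ 𝒬 (i + j))
    [Module.Finite A P] [Module.Projective A P]
    (f : M →ₗ[A] N) (hfgraded : ∀ n : ℤ, ∀ x ∈ ℳ n, f x ∈ 𝒩 n)
    (g : N →ₗ[A] P) (hggraded : ∀ n : ℤ, ∀ x ∈ 𝒩 n, g x ∈ 𝒬 n)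
    (hcomplex : ∀ x : M, g (f x) = 0) :
    (Function.Injective f ∧ LinearMap.range f = LinearMap.ker g ∧
        Function.Surjective g) ↔
      (Function.Injective (LinearMap.baseChange A' f) ∧
        LinearMap.range (LinearMap.baseChange A' f)
          = LinearMap.ker (LinearMap.baseChange A' g) ∧
        Function.Surjective (LinearMap.baseChange A' g)) :=
  gradedComplex_exact_iff_baseChange_exact_general 𝒜 SF 𝒜' SF' hquot ℳ hMint hMsmul 𝒩 hNint hNsmul 𝒬
    hPint hPsmul f hfgraded g hggraded hcomplex
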